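/- arXiv:2408.05120 — 2 statements merged into one kernel-verified Lean document; each statement's English description precedes it below -/
import Mathlib

section
/- (Proposition: CDF dominance under bit-flip-monotonic statistics.) Let f : {0,1}^m → ℝ be monotonic w.r.t. 0→1 bit-flipping, and let p, p' ∈ [0,1]^m be monotonic probability vectors (i.e. p_1 ≤ p_2 ≤ … ≤ p_m and p'_1 ≤ p'_2 ≤ … ≤ p'_m) with p ≤ p' pointwise (p_i ≤ p'_i for all i). Then for every t ∈ ℝ, F_{f,p}(t) ≥ F_{f,p'}(t), where F_{f,p}(t) := Pr(f(S^p) < t) and S^p is a heterogeneous Bernoulli vector with parameter vector p. -/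
open Finset

/-- The 0→1 bit-flipping function `g_k`: sets coordinate `k` to `1` (here `true`)
and leaves all other coordinates unchanged. -/
def bitFlip {m : ℕ} (k : Fin m) (v : Fin m → Bool) : Fin m → Bool :=
  Function.update v k true

/-- A statistic function `f : {0,1}^m → ℝ` is monotonic w.r.t. 0→1 bit-flipping if
`f(v) ≤ f(g_k(v))` for every `v` and every `k`. -/
def BitFlipMono {m : ℕ} (f : (Fin m → Bool) → ℝ) : Prop :=
  ∀ (v : Fin m → Bool) (k : Fin m), f v ≤ f (bitFlip k v)

/-- The probability of a heterogeneous Bernoulli vector `S^p ~ HBernoulli(p)` (independent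
components with `S^p_i ~ Bernoulli(p_i)`) taking the value `ω ∈ {0,1}^m`. -/
noncomputable def hbernProb {m : ℕ} (p : Fin m → ℝ) (ω : Fin m → Bool) : ℝ :=
  ∏ i, if ω i then p i else 1 - p i

/-- `F_{f,p}(t) := Pr(f(S^p) < t)`, the CDF for the statistic function `f` of the
heterogeneous Bernoulli vector `S^p ~ HBernoulli(p)`. -/
noncomputable def hbernCDF {m : ℕ} (p : Fin m → ℝ) (f : (Fin m → Bool) → ℝ) (t : ℝ) : ℝ :=
  ∑ ω : Fin m → Bool, hbernProb p ω * (if f ω < t then 1 else 0)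

lemma key {m : ℕ} (f : (Fin m → Bool) → ℝ) (hf : BitFlipMono f) (t : ℝ)
    (k : Fin m) (p q : Fin m → ℝ)
    (hbound : ∀ i, i ≠ k → 0 ≤ p i ∧ p i ≤ 1)
    (hpq : ∀ i, i ≠ k → q i = p i) (hk : p k ≤ q k) :
    hbernCDF q f t ≤ hbernCDF p f t := by
  set h : (Fin m → Bool) → ℝ := fun ω => if f ω < t then 1 else 0 with hh
  set R : (Fin m → Bool) → ℝ :=
    fun ω => ∏ i ∈ univ.erase k, (if ω i then p i else 1 - p i) with hRdef
  have hRnn : ∀ ω, 0 ≤ R ω := by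
    intro ω
    apply Finset.prod_nonneg
    intro i hi
    rcases hbound i (Finset.mem_erase.mp hi).1 with ⟨h0, h1⟩
    split <;> linarith
  have hRflip : ∀ ω b, R (Function.update ω k b) = R ω := by
    intro ω b
    apply Finset.prod_congr rfl
    intro i hi
    rw [Function.update_of_ne (Finset.mem_erase.mp hi).1]
  have hmonoh : ∀ ω, h (bitFlip k ω) ≤ h ω := by
    intro ω
    simp only [hh]
    split_ifs with h1 h2
    · norm_num
    · exact absurd (lt_of_le_of_lt (hf ω k) h1) h2
    · norm_num
    · norm_num
  set F : (Fin m → Bool) → ℝ :=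
    fun ω => (if ω k then (-1:ℝ) else 1) * (R ω * h ω) with hFdef
  set ι : (Fin m → Bool) → (Fin m → Bool) := fun ω => Function.update ω k (!ω k) with hι
  have hιinv : Function.Involutive ι := by
    intro ω
    simp only [hι, Function.update_self]
    rw [Function.update_idem, Bool.not_not, Function.update_eq_self]
  -- step 1: difference formula
  have hprob : ∀ ω, hbernProb p ω = (if ω k then p k else 1 - p k) * R ω := by
    intro ω
    rw [hbernProb, ← Finset.mul_prod_erase univ _ (mem_univ k)]
  have hprobq : ∀ ω, hbernProb q ω = (if ω k then q k else 1 - q k) * R ω := by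
    intro ω
    rw [hbernProb, ← Finset.mul_prod_erase univ _ (mem_univ k)]
    congr 1
    apply Finset.prod_congr rfl
    intro i hi
    rw [hpq i (Finset.mem_erase.mp hi).1]
  have hdiff : hbernCDF p f t - hbernCDF q f t = (q k - p k) * ∑ ω, F ω := by
    rw [hbernCDF, hbernCDF, ← Finset.sum_sub_distrib, Finset.mul_sum]
    apply Finset.sum_congr rfl
    intro ω _
    rw [hprob, hprobq]
    by_cases hb : ω k = true
    · simp only [hFdef, hb, if_pos, hh]; ring
    · have hb' : ω k = false := by simpa using hb
      simp only [hFdef, hb', Bool.false_eq_true, if_false]; ring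
  -- step 2: each paired term nonneg
  have hpair : ∀ ω, 0 ≤ F ω + F (ι ω) := by
    intro ω
    by_cases hb : ω k = true
    · have hv : ι ω = Function.update ω k false := by simp [hι, hb]
      have hbf : bitFlip k (ι ω) = ω := by
        rw [hv, bitFlip, Function.update_idem, ← hb, Function.update_eq_self]
      have h1 : F ω = -(R ω * h ω) := by simp [hFdef, hb]
      have hRι : R (ι ω) = R ω := hRflip ω _
      have h2 : F (ι ω) = R ω * h (ι ω) := by
        have hb2 : (ι ω) k = false := by simp [hι, hb]
        show (if (ι ω) k = true then (-1:ℝ) else 1) * (R (ι ω) * h (ι ω)) = _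
        rw [hb2, hRι]; norm_num
      rw [h1, h2]
      have := hmonoh (ι ω)
      rw [hbf] at this
      nlinarith [hRnn ω]
    · simp only [Bool.not_eq_true] at hb
      have hv : ι ω = bitFlip k ω := by simp [hι, hb, bitFlip]
      have h1 : F ω = R ω * h ω := by simp [hFdef, hb]
      have hRι : R (ι ω) = R ω := hRflip ω _
      have h2 : F (ι ω) = -(R ω * h (ι ω)) := by
        have hb2 : (ι ω) k = true := by simp [hι, hb]
        show (if (ι ω) k = true then (-1:ℝ) else 1) * (R (ι ω) * h (ι ω)) = _
        rw [hb2, hRι]; norm_num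
      rw [h1, h2, hv]
      have := hmonoh ω
      nlinarith [hRnn ω]
  -- step 3: sum nonneg via involution
  have hsum2 : ∑ ω, F ω = ∑ ω, F (ι ω) :=
    (Fintype.sum_bijective ι hιinv.bijective (fun ω => F (ι ω)) F (fun ω => rfl)).symm
  have hsum : 0 ≤ ∑ ω : Fin m → Bool, F ω := by
    have : 0 ≤ (∑ ω : Fin m → Bool, F ω) + ∑ ω : Fin m → Bool, F (ι ω) := by
      rw [← Finset.sum_add_distrib]
      exact Finset.sum_nonneg fun ω _ => hpair ω
    linarith [hsum2]
  nlinarith [mul_nonneg (sub_nonneg.mpr hk) hsum]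

/-- CDF dominance under bit-flip-monotonic statistics: if `f` is monotonic w.r.t.
0→1 bit-flipping and `p, p' ∈ [0,1]^m` are monotonic probability vectors with `p ≤ p'`
pointwise, then `F_{f,p}(t) ≥ F_{f,p'}(t)` for every `t ∈ ℝ`. -/
theorem hbernCDF_dominance {m : ℕ} (f : (Fin m → Bool) → ℝ) (hf : BitFlipMono f)
    (p p' : Fin m → ℝ)
    (hp : ∀ i, p i ∈ Set.Icc (0 : ℝ) 1) (hp' : ∀ i, p' i ∈ Set.Icc (0 : ℝ) 1)
    (hpmono : Monotone p) (hp'mono : Monotone p')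
    (hle : ∀ i, p i ≤ p' i) (t : ℝ) :
    hbernCDF p' f t ≤ hbernCDF p f t := by
  set r : ℕ → Fin m → ℝ := fun j i => if (i : ℕ) < j then p' i else p i with hr
  have hstep : ∀ j, j < m → hbernCDF (r (j+1)) f t ≤ hbernCDF (r j) f t := by
    intro j hj
    apply key f hf t ⟨j, hj⟩ (r j) (r (j+1))
    · intro i _
      simp only [hr]
      split
      · exact ⟨(hp' i).1, (hp' i).2⟩
      · exact ⟨(hp i).1, (hp i).2⟩
    · intro i hik
      have hij : (i : ℕ) ≠ j := fun hc => hik (Fin.ext hc)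
      have : ((i:ℕ) < j+1) ↔ ((i:ℕ) < j) := by omega
      simp only [hr, this]
    · have h1 : r j ⟨j, hj⟩ = p ⟨j, hj⟩ := by simp [hr]
      have h2 : r (j+1) ⟨j, hj⟩ = p' ⟨j, hj⟩ := by simp [hr]
      rw [h1, h2]
      exact hle _
  have hchain : ∀ j, j ≤ m → hbernCDF (r j) f t ≤ hbernCDF (r 0) f t := by
    intro j
    induction j with
    | zero => intro _; exact le_refl _
    | succ n ih =>
      intro hn
      exact le_trans (hstep n (by omega)) (ih (by omega))
  have h0 : r 0 = p := by funext i; simp [hr]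
  have hm : r m = p' := by funext i; simp [hr, i.isLt]
  have := hchain m le_rfl
  rwa [h0, hm] at this
end

section
/- (Main theorem: probabilistic guarantee for lower bounds.) Let c = (c_1,…,c_m) ∈ [0,1]^m be a monotonic probability vector (c_1 ≤ … ≤ c_m) and let D^c be a heterogeneous Bernoulli vector with parameter vector c. Let f : {0,1}^m → ℝ be monotonic w.r.t. 0→1 bit-flipping, let q ∈ [0,1], and let t ∈ ℝ. If c_m < LB_{f,q}(t), then Pr(f(D^c) ≥ t) ≤ 1 − q, where LB_{f,q}(t) := max{ p ∈ [0,1] : Pr(f(S^{(p,…,p)}) < t) ≥ q } (assuming this set is nonempty and its supremum p̂ satisfies Pr(f(S^{(p̂,…,p̂)}) < t) ≥ q). -/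
open Finset

/-- `Pr(f(S^p) < t)` for the heterogeneous Bernoulli vector `S^p ~ HBernoulli(p)`. -/
noncomputable def probLT {m : ℕ} (p : Fin m → ℝ) (f : (Fin m → Bool) → ℝ) (t : ℝ) : ℝ :=
  ∑ ω : Fin m → Bool, hbernProb p ω * (if f ω < t then 1 else 0)

/-- `Pr(f(S^p) ≥ t)` for the heterogeneous Bernoulli vector `S^p ~ HBernoulli(p)`. -/
noncomputable def probGE {m : ℕ} (p : Fin m → ℝ) (f : (Fin m → Bool) → ℝ) (t : ℝ) : ℝ :=
  ∑ ω : Fin m → Bool, hbernProb p ω * (if t ≤ f ω then 1 else 0)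

lemma hbern_sum_one {m : ℕ} (p : Fin m → ℝ) :
    ∑ ω : Fin m → Bool, hbernProb p ω = 1 := by
  unfold hbernProb
  rw [← Fintype.prod_sum (fun (i : Fin m) (b : Bool) => if b then p i else 1 - p i)]
  simp

lemma probGE_eq {m : ℕ} (p : Fin m → ℝ) (f : (Fin m → Bool) → ℝ) (t : ℝ) :
    probGE p f t = 1 - probLT p f t := by
  unfold probGE probLT
  have h : ∀ ω, hbernProb p ω * (if t ≤ f ω then (1:ℝ) else 0)
      = hbernProb p ω - hbernProb p ω * (if f ω < t then 1 else 0) := by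
    intro ω
    rcases lt_or_ge (f ω) t with h | h
    · rw [if_pos h, if_neg (not_le.2 h)]; ring
    · rw [if_neg (not_lt.2 h), if_pos h]; ring
  rw [Finset.sum_congr rfl fun ω _ => h ω, Finset.sum_sub_distrib, hbern_sum_one]

/-- one-coordinate monotonicity of `probLT` -/
lemma probLT_update_le {m : ℕ} (p : Fin m → ℝ) (hp : ∀ i, 0 ≤ p i ∧ p i ≤ 1)
    (f : (Fin m → Bool) → ℝ) (hf : BitFlipMono f) (t : ℝ) (k : Fin m)
    {a b : ℝ} (hab : a ≤ b) :
    probLT (Function.update p k b) f t ≤ probLT (Function.update p k a) f t := by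
  set R : (Fin m → Bool) → ℝ :=
    fun ω => ∏ i ∈ univ.erase k, (if ω i then p i else 1 - p i) with hR
  set ind : (Fin m → Bool) → ℝ := fun ω => if f ω < t then 1 else 0 with hind
  have hRnn : ∀ ω, 0 ≤ R ω := by
    intro ω
    refine Finset.prod_nonneg fun i _ => ?_
    rcases hp i with ⟨h0, h1⟩
    split <;> linarith
  have hindnn : ∀ ω, 0 ≤ ind ω := by
    intro ω; simp only [hind]; split <;> norm_num
  have hRup : ∀ (ω : Fin m → Bool) (b' : Bool), R (Function.update ω k b') = R ω := by
    intro ω b'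
    refine Finset.prod_congr rfl fun i hi => ?_
    rw [Function.update_of_ne (Finset.ne_of_mem_erase hi)]
  have hindflip : ∀ ω : Fin m → Bool, ind (Function.update ω k true) ≤ ind ω := by
    intro ω
    have := hf ω k
    simp only [hind, bitFlip] at this ⊢
    split
    · next h =>
        have : f ω < t := lt_of_le_of_lt this h
        rw [if_pos this]
    · exact hindnn ω
  have key : ∀ x : ℝ, probLT (Function.update p k x) f t
      = ∑ ω : Fin m → Bool, (if ω k then x else 1 - x) * (R ω * ind ω) := by
    intro x
    unfold probLT hbernProb
    refine Finset.sum_congr rfl fun ω _ => ?_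
    rw [← Finset.mul_prod_erase univ _ (Finset.mem_univ k)]
    have hprod : ∏ i ∈ univ.erase k, (if ω i then Function.update p k x i
        else 1 - Function.update p k x i) = R ω := by
      refine Finset.prod_congr rfl fun i hi => ?_
      rw [Function.update_of_ne (Finset.ne_of_mem_erase hi)]
    rw [hprod, Function.update_self]
    ring
  rw [key a, key b, ← sub_nonneg, ← Finset.sum_sub_distrib]
  have hterm : ∀ ω : Fin m → Bool,
      (if ω k then a else 1 - a) * (R ω * ind ω) - (if ω k then b else 1 - b) * (R ω * ind ω)
      = (if ω k then a - b else b - a) * (R ω * ind ω) := by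
    intro ω; split <;> ring
  rw [Finset.sum_congr rfl fun ω _ => hterm ω]
  set G : (Fin m → Bool) → ℝ := fun ω => (if ω k then a - b else b - a) * (R ω * ind ω)
    with hG
  set σ : (Fin m → Bool) → (Fin m → Bool) := fun ω => Function.update ω k (!ω k) with hσ
  have hinv : Function.Involutive σ := by
    intro ω
    funext i
    by_cases h : i = k
    · subst h; simp [hσ]
    · simp [hσ, Function.update_of_ne h]
  have hsum : ∑ ω : Fin m → Bool, G ω = ∑ ω : Fin m → Bool, G (σ ω) :=
    (Equiv.sum_comp hinv.toPerm G).symm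
  have hpair : ∀ ω : Fin m → Bool, 0 ≤ G ω + G (σ ω) := by
    intro ω
    cases hωk : ω k
    · -- ω k = false, σ ω k = true
      have hσω : σ ω = Function.update ω k true := by simp [hσ, hωk]
      have h1 : (σ ω) k = true := by rw [hσω, Function.update_self]
      have hTle : R (σ ω) * ind (σ ω) ≤ R ω * ind ω := by
        rw [hσω, hRup]
        exact mul_le_mul_of_nonneg_left (hindflip ω) (hRnn ω)
      simp only [hG, hωk, h1, Bool.false_eq_true, if_true, if_false]
      nlinarith
    · -- ω k = true
      have hσωk : (σ ω) k = false := by simp [hσ, hωk]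
      have hωeq : Function.update (σ ω) k true = ω := by
        funext i
        by_cases h : i = k
        · subst h; simp [hωk]
        · simp [hσ, Function.update_of_ne h]
      have hRσ : R (σ ω) = R ω := hRup ω _
      have hindle : ind ω ≤ ind (σ ω) := by
        conv_lhs => rw [← hωeq]
        exact hindflip (σ ω)
      have hTle : R ω * ind ω ≤ R (σ ω) * ind (σ ω) := by
        rw [hRσ]
        exact mul_le_mul_of_nonneg_left hindle (hRnn ω)
      simp only [hG, hωk, hσωk, Bool.false_eq_true, if_true, if_false]
      nlinarith
  have h2 : 0 ≤ ∑ ω : Fin m → Bool, (G ω + G (σ ω)) :=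
    Finset.sum_nonneg fun ω _ => hpair ω
  rw [Finset.sum_add_distrib, ← hsum] at h2
  linarith

lemma probLT_mono {m : ℕ} (p p' : Fin m → ℝ) (hp : ∀ i, 0 ≤ p i ∧ p i ≤ 1)
    (hp' : ∀ i, 0 ≤ p' i ∧ p' i ≤ 1) (hpp' : ∀ i, p i ≤ p' i)
    (f : (Fin m → Bool) → ℝ) (hf : BitFlipMono f) (t : ℝ) :
    probLT p' f t ≤ probLT p f t := by
  classical
  have main : ∀ s : Finset (Fin m),
      probLT (fun i => if i ∈ s then p' i else p i) f t ≤ probLT p f t := by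
    intro s
    induction s using Finset.induction with
    | empty => simp
    | @insert k s hks ih =>
      have hmix : ∀ i, 0 ≤ (if i ∈ s then p' i else p i) ∧ (if i ∈ s then p' i else p i) ≤ 1 := by
        intro i; split; exacts [hp' i, hp i]
      have heq : (fun i => if i ∈ insert k s then p' i else p i)
          = Function.update (fun i => if i ∈ s then p' i else p i) k (p' k) := by
        funext i
        by_cases h : i = k
        · subst h; simp [hks]
        · simp [Function.update_of_ne h, Finset.mem_insert, h]
      have heq2 : Function.update (fun i => if i ∈ s then p' i else p i) k (p k)
          = fun i => if i ∈ s then p' i else p i := by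
        funext i
        by_cases h : i = k
        · subst h; simp [hks]
        · simp [Function.update_of_ne h]
      calc probLT (fun i => if i ∈ insert k s then p' i else p i) f t
          = probLT (Function.update (fun i => if i ∈ s then p' i else p i) k (p' k)) f t := by
            rw [heq]
        _ ≤ probLT (Function.update (fun i => if i ∈ s then p' i else p i) k (p k)) f t :=
            probLT_update_le _ hmix f hf t k (hpp' k)
        _ = probLT (fun i => if i ∈ s then p' i else p i) f t := by rw [heq2]
        _ ≤ probLT p f t := ih
  have := main Finset.univ
  simpa using this

/-- Main theorem: probabilistic guarantee for lower bounds.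
Let `c = (c_1,…,c_m)` (here indexed by `Fin (m+1)`, so the vector is nonempty and its last
entry is `c (Fin.last m)`) be a monotonic probability vector in `[0,1]^m` and `D^c` the
corresponding heterogeneous Bernoulli vector. Let `f` be monotonic w.r.t. 0→1 bit-flipping,
`q ∈ [0,1]`, `t ∈ ℝ`, and let
`A = { p ∈ [0,1] : Pr(f(S^{(p,…,p)}) < t) ≥ q }` with `LB_{f,q}(t) := sup A`, where we assume
`A` is nonempty and its supremum `p̂` satisfies `Pr(f(S^{(p̂,…,p̂)}) < t) ≥ q`.
If `c_m < LB_{f,q}(t)` then `Pr(f(D^c) ≥ t) ≤ 1 − q`. -/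
theorem lower_bound_probabilistic_guarantee {m : ℕ} (c : Fin (m + 1) → ℝ)
    (hc : ∀ i, c i ∈ Set.Icc (0 : ℝ) 1) (hcmono : Monotone c)
    (f : (Fin (m + 1) → Bool) → ℝ) (hf : BitFlipMono f)
    (q : ℝ) (hq : q ∈ Set.Icc (0 : ℝ) 1) (t : ℝ)
    (A : Set ℝ)
    (hA : A = {p : ℝ | p ∈ Set.Icc (0 : ℝ) 1 ∧ q ≤ probLT (fun _ : Fin (m + 1) => p) f t})
    (hAne : A.Nonempty)
    (hsup : q ≤ probLT (fun _ : Fin (m + 1) => sSup A) f t)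
    (hlt : c (Fin.last m) < sSup A) :
    probGE c f t ≤ 1 - q := by
  set phat := sSup A with hphat
  have hbdd : BddAbove A := by
    refine ⟨1, fun x hx => ?_⟩
    rw [hA] at hx
    exact hx.1.2
  obtain ⟨a, ha⟩ := hAne
  have ha' := ha
  rw [hA] at ha'
  have hphat0 : 0 ≤ phat := le_trans ha'.1.1 (le_csSup hbdd ha)
  have hphat1 : phat ≤ 1 := csSup_le ⟨a, ha⟩ fun x hx => by rw [hA] at hx; exact hx.1.2
  have hmono : probLT (fun _ : Fin (m + 1) => phat) f t ≤ probLT c f t := by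
    refine probLT_mono c (fun _ => phat) (fun i => ⟨(hc i).1, (hc i).2⟩)
      (fun _ => ⟨hphat0, hphat1⟩) (fun i => ?_) f hf t
    exact le_of_lt (lt_of_le_of_lt (hcmono (Fin.le_last i)) hlt)
  rw [probGE_eq]
  linarith [le_trans hsup hmono]
end
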